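/- Let F be a nonmeager filter on ℕ. Then F is nonmeager-bounding: for every family Y ⊆ ℕ^ℕ with |Y| < b(F), the set {g increasing : ∀ f ∈ Y, f ≤_F g} is nonmeager. -/

import Mathlib

open Set Filter Cardinal

/-- A semifilter: a nonempty family of infinite subsets of ℕ closed under
almost-supersets. -/
def SemifilterOn (F : Set (Set ℕ)) : Prop :=
  F.Nonempty ∧ (∀ A ∈ F, A.Infinite) ∧
    ∀ A ∈ F, ∀ B : Set ℕ, (A \ B).Finite → B ∈ F

/-- `f ≤_F g` : the set where `f ≤ g` belongs to `F`. -/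
def LeSF (F : Set (Set ℕ)) (f g : ℕ → ℕ) : Prop := {n | f n ≤ g n} ∈ F

/-- `Y` is bounded with respect to `≤_F`. -/
def BoundedSF (F : Set (Set ℕ)) (Y : Set (ℕ → ℕ)) : Prop :=
  ∃ g : ℕ → ℕ, ∀ f ∈ Y, LeSF F f g

/-- `b(F)` : the minimal cardinality of a `≤_F`-unbounded family in `ℕ^ℕ`. -/
noncomputable def bSF (F : Set (Set ℕ)) : Cardinal :=
  sInf {c : Cardinal | ∃ Y : Set (ℕ → ℕ), #Y = c ∧ ¬ BoundedSF F Y}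

/-- `f ≤* g` : eventual domination. -/
def EvLe (f g : ℕ → ℕ) : Prop := ∀ᶠ n in Filter.atTop, f n ≤ g n

/-- A filter: a semifilter closed under finite intersections. -/
def FilterOn (F : Set (Set ℕ)) : Prop :=
  SemifilterOn F ∧ ∀ A ∈ F, ∀ B ∈ F, A ∩ B ∈ F

/-- `F` is nonmeager, viewed as a subset of `2^ℕ`. -/
def NonmeagerSF (F : Set (Set ℕ)) : Prop :=
  ¬ IsMeagre {x : ℕ → Bool | {n | x n = true} ∈ F}

/-!
As `#Y < b(F)`, all of `Y` lies `≤_F`-below one `g`, and since `≤_F` is transitive for a filter,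
every `h` with `g ≤_F h` bounds `Y`; so it is enough that `{h | g ≤_F h}` is nonmeager.
If it were meager, say covered by nowhere dense sets `T₀ ⊆ T₁ ⊆ ⋯`, a fusion argument gives
blocks `Iₖ = [nₖ, nₖ₊₁)` and an increasing `σ` with `g (nₖ) ≤ σ (nₖ)` such that no increasing
sequence agreeing with `σ` on `Iₖ` lies in `Tₖ`. If some `A ∈ F` missed infinitely many blocks,
then taking `σ` on those blocks and `max σ g` elsewhere would give an increasing `h` with
`g ≤_F h` lying in no `Tₘ`. So every member of `F` meets almost every block, and then `F` is
meager (Talagrand's criterion).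
-/

open PiNat Topology

lemma SemifilterOn.mem_of_superset {F : Set (Set ℕ)} (hF : SemifilterOn F) {A B : Set ℕ}
    (hA : A ∈ F) (hAB : A ⊆ B) : B ∈ F :=
  hF.2.2 A hA B (by simp [sdiff_eq_empty.2 hAB])

lemma FilterOn.leSF_trans {F : Set (Set ℕ)} (hF : FilterOn F) {f g h : ℕ → ℕ}
    (hfg : LeSF F f g) (hgh : LeSF F g h) : LeSF F f h :=
  hF.1.mem_of_superset (hF.2 _ hfg _ hgh) fun i hi => show f i ≤ h i from le_trans hi.1 hi.2

lemma boundedSF_of_mk_lt_bSF {F : Set (Set ℕ)} {Y : Set (ℕ → ℕ)} (hY : #Y < bSF F) :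
    BoundedSF F Y := by
  by_contra h
  exact hY.not_ge (csInf_le' ⟨Y, rfl, h⟩)

lemma exists_strictMono_ge (f : ℕ → ℕ) : ∃ g : ℕ → ℕ, StrictMono g ∧ f ≤ g := by
  refine ⟨fun i => ∑ j ∈ Finset.range (i + 1), (f j + 1), ?_, fun i => ?_⟩
  · refine strictMono_nat_of_lt_succ fun i => ?_
    rw [Finset.sum_range_succ _ (i + 1)]
    omega
  · exact Nat.le_of_succ_le <| Finset.single_le_sum (f := fun j => f j + 1)
      (fun _ _ => Nat.zero_le _) (Finset.self_mem_range_succ i)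

lemma StrictMono.max_indicator {f g : ℕ → ℕ} (hf : StrictMono f) (hg : StrictMono g)
    {B : Set ℕ} (hB : ∀ i ∈ B, i + 1 ∉ B → g (i + 1) ≤ f (i + 1)) :
    StrictMono fun i => max (f i) (B.indicator g i) := by
  refine strictMono_nat_of_lt_succ fun i => max_lt ?_ ?_
  · exact (hf i.lt_succ_self).trans_le (le_max_left _ _)
  · by_cases hi : i ∈ B
    · rw [indicator_of_mem hi]
      refine (hg i.lt_succ_self).trans_le ?_
      by_cases hi' : i + 1 ∈ B
      · exact (indicator_of_mem hi' g).ge.trans (le_max_right _ _)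
      · exact (hB i hi hi').trans (le_max_left _ _)
    · rw [indicator_of_notMem hi]
      exact (Nat.zero_le _).trans_lt ((hf i.lt_succ_self).trans_le (le_max_left _ _))

lemma StrictMono.piecewise_Iio {α : Type*} [Preorder α] {x y : ℕ → α} (hx : StrictMono x)
    (hy : StrictMono y) {n : ℕ} (h : x n ≤ y n) : StrictMono ((Iio n).piecewise x y) := by
  intro i j hij
  by_cases hj : j < n
  · simp only [piecewise, mem_Iio, hj, hij.trans hj, if_true]
    exact hx hij
  · by_cases hi : i < n
    · simp only [piecewise, mem_Iio, hj, hi, if_true, if_false]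
      exact (hx hi).trans_le (h.trans (hy.monotone (not_lt.1 hj)))
    · simp only [piecewise, mem_Iio, hj, hi, if_false]
      exact hy hij

lemma exists_eqOn_Iio_of_eqOn_succ {α : Type*} {x : ℕ → ℕ → α} {n : ℕ → ℕ} (hn : StrictMono n)
    (hx : ∀ k, EqOn (x (k + 1)) (x k) (Iio (n k))) :
    ∃ σ : ℕ → α, ∀ k, EqOn σ (x k) (Iio (n k)) := by
  have hle : ∀ j k, j ≤ k → EqOn (x k) (x j) (Iio (n j)) := by
    intro j k hjk
    induction k, hjk using Nat.le_induction with
    | base => exact fun _ _ => rfl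
    | succ k hjk ih => exact ((hx k).mono (Iio_subset_Iio (hn.monotone hjk))).trans ih
  refine ⟨fun i => x (i + 1) i, fun k i hi => ?_⟩
  rcases le_total k (i + 1) with hk | hk
  · exact hle k (i + 1) hk hi
  · exact (hle (i + 1) k hk (i.lt_succ_self.trans_le hn.le_apply)).symm

lemma PiNat.exists_cylinder_subset {E : ℕ → Type*} [∀ i, TopologicalSpace (E i)]
    [∀ i, DiscreteTopology (E i)] {s : Set (∀ i, E i)} {x : ∀ i, E i} (hs : s ∈ 𝓝 x) :
    ∃ N, cylinder x N ⊆ s := by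
  obtain ⟨_, ⟨c, N, rfl⟩, hxc, hcs⟩ := (isTopologicalBasis_cylinders E).mem_nhds_iff.1 hs
  exact ⟨N, (mem_cylinder_iff_eq.1 hxc).subset.trans hcs⟩

lemma IsNowhereDense.union {X : Type*} [TopologicalSpace X] {s t : Set X}
    (hs : IsNowhereDense s) (ht : IsNowhereDense t) : IsNowhereDense (s ∪ t) := by
  rw [IsNowhereDense, closure_union, interior_eq_empty_iff_dense_compl, compl_union]
  exact (interior_eq_empty_iff_dense_compl.1 hs).inter_of_isOpen_left
    (interior_eq_empty_iff_dense_compl.1 ht) isClosed_closure.isOpen_compl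

lemma IsMeagre.exists_monotone_isNowhereDense {X : Type*} [TopologicalSpace X] {s : Set X}
    (hs : IsMeagre s) :
    ∃ T : ℕ → Set X, Monotone T ∧ (∀ k, IsNowhereDense (T k)) ∧ s ⊆ ⋃ k, T k := by
  obtain ⟨S, hSnd, hScnt, hsS⟩ := isMeagre_iff_countable_union_isNowhereDense.1 hs
  obtain ⟨f, hf⟩ := (hScnt.insert ∅).exists_eq_range (insert_nonempty _ _)
  have hfnd : ∀ m, IsNowhereDense (f m) := by
    intro m
    rcases (hf ▸ mem_range_self m : f m ∈ insert ∅ S) with h | h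
    · exact h ▸ isNowhereDense_empty
    · exact hSnd _ h
  refine ⟨accumulate f, monotone_accumulate, fun k => ?_, ?_⟩
  · induction k with
    | zero => simpa [accumulate_def] using hfnd 0
    | succ k ih => exact accumulate_succ f k ▸ ih.union (hfnd _)
  · rw [iUnion_accumulate, ← sUnion_range, ← hf]
    exact hsS.trans (sUnion_mono (subset_insert _ _))

lemma IsNowhereDense.exists_cylinder_notMem {α : Type*} [TopologicalSpace α]
    [DiscreteTopology α] {p : (ℕ → α) → Prop} {T : Set (Subtype p)}
    (hT : IsNowhereDense T) (z : Subtype p) (n : ℕ) :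
    ∃ w : Subtype p, EqOn w.1 z.1 (Iio n) ∧
      ∃ N ≥ n, ∀ y : Subtype p, EqOn y.1 w.1 (Iio N) → y ∉ T := by
  obtain ⟨w, hwT, hwz⟩ := (interior_eq_empty_iff_dense_compl.1 hT).exists_mem_open
    ((isOpen_cylinder (fun _ => α) z.1 n).preimage continuous_subtype_val) ⟨z, fun _ _ => rfl⟩
  obtain ⟨u, hu, hut⟩ :=
    (mem_nhds_induced Subtype.val w _).1 (isClosed_closure.isOpen_compl.mem_nhds hwT)
  obtain ⟨N, hN⟩ := exists_cylinder_subset hu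
  exact ⟨w, fun i hi => hwz i hi, max n N, le_max_left _ _, fun y hy hyT =>
    hut (hN fun i hi => hy (lt_max_of_lt_right hi)) (subset_closure hyT)⟩

lemma isMeagre_setOf_eventually_exists_mem_Ico {n : ℕ → ℕ} (hn : StrictMono n) :
    IsMeagre {x : ℕ → Bool | ∀ᶠ k in atTop, ∃ i ∈ Ico (n k) (n (k + 1)), x i = true} := by
  let C : ℕ → Set (ℕ → Bool) := fun m =>
    ⋂ k ≥ m, ⋃ i ∈ Finset.Ico (n k) (n (k + 1)), {x | x i = true}
  have hC : ∀ m, IsClosed (C m) := fun m =>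
    isClosed_biInter fun k _ => isClosed_biUnion_finset fun i _ =>
      isClosed_eq (continuous_apply i) continuous_const
  have hCint : ∀ m, interior (C m) = ∅ := by
    refine fun m => eq_empty_of_forall_notMem fun x hx => ?_
    obtain ⟨N, hN⟩ := exists_cylinder_subset (isOpen_interior.mem_nhds hx)
    have hy : (Iio N).piecewise x (fun _ => false) ∈ C m :=
      interior_subset (hN fun i hi => piecewise_eq_of_mem _ _ _ hi)
    simp only [C, mem_iInter, mem_iUnion, Finset.mem_Ico, mem_ofPred_eq] at hy
    obtain ⟨i, ⟨hi, -⟩, hyi⟩ := hy (max m N) (le_max_left _ _)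
    have hNi : N ≤ i := ((le_max_right m N).trans hn.le_apply).trans hi
    rw [piecewise_eq_of_notMem (Iio N) x _ (show i ∉ Iio N from not_lt.2 hNi)] at hyi
    exact Bool.false_ne_true hyi
  refine (isMeagre_iUnion fun m => ((hC m).isNowhereDense_iff.2 (hCint m)).isMeagre).mono ?_
  intro x hx
  obtain ⟨m, hm⟩ := eventually_atTop.1 hx
  simpa [C] using ⟨m, hm⟩

abbrev IncSeq := {g : ℕ → ℕ // StrictMono g}

namespace IncSeq

def splice (x y : IncSeq) (n : ℕ) (h : x.1 n ≤ y.1 n) : IncSeq :=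
  ⟨(Iio n).piecewise x.1 y.1, x.2.piecewise_Iio y.2 h⟩

variable {x y : IncSeq} {n : ℕ} {h : x.1 n ≤ y.1 n}

lemma splice_eqOn_left : EqOn (splice x y n h).1 x.1 (Iio n) :=
  piecewise_eqOn _ _ _

lemma splice_eqOn_right : EqOn (splice x y n h).1 y.1 (Ici n) := by
  rw [← compl_Iio]
  exact piecewise_eqOn_compl _ _ _

end IncSeq

open IncSeq

lemma IsNowhereDense.exists_eqOn_Ico_notMem {T : Set IncSeq} (hT : IsNowhereDense T)
    (x : IncSeq) (n : ℕ) :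
    ∃ x' : IncSeq, EqOn x'.1 x.1 (Iic n) ∧
      ∃ n' > n, ∀ y : IncSeq, EqOn y.1 x'.1 (Ico n n') → y ∉ T := by
  let restrict : IncSeq → Fin n → ℕ := fun y i => y.1 i
  -- every `y` with `y n = x n` takes values below `x n` before `n`: finitely many restrictions
  have hfin : (restrict '' {y | y.1 n = x.1 n}).Finite :=
    (Set.Finite.pi fun _ => finite_Iio (x.1 n)).subset <| by
      rintro _ ⟨y, hy, rfl⟩ i -
      exact hy ▸ y.2 i.2
  have key : ∀ P ⊆ restrict '' {y | y.1 n = x.1 n}, P.Finite → ∃ x' : IncSeq,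
      EqOn x'.1 x.1 (Iic n) ∧ ∃ n' > n, ∀ y : IncSeq,
        restrict y ∈ P → EqOn y.1 x'.1 (Ico n n') → y ∉ T := by
    intro P hP hPfin
    induction P, hPfin using Set.Finite.induction_on with
    | empty => exact ⟨x, fun _ _ => rfl, n + 1, n.lt_succ_self, fun _ h => h.elim⟩
    | @insert q P _ _ ih =>
      obtain ⟨x', hx', n', hnn', hx'T⟩ := ih ((subset_insert q P).trans hP)
      obtain ⟨r, hr, rfl⟩ := hP (mem_insert _ _)
      have hrx' : r.1 n ≤ x'.1 n := (hr.trans (hx' self_mem_Iic).symm).le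
      obtain ⟨w, hw, N, hN, hwT⟩ := hT.exists_cylinder_notMem (splice r x' n hrx') n'
      have hwx' : EqOn w.1 x'.1 (Ico n n') := fun i hi =>
        (hw hi.2).trans (splice_eqOn_right hi.1)
      have hx'w : x'.1 n ≤ w.1 n := (hwx' ⟨le_rfl, hnn'⟩).ge
      refine ⟨splice x' w n hx'w, ?_, N, hnn'.trans_le hN, ?_⟩
      · have hsx' : EqOn (splice x' w n hx'w).1 x'.1 (Iio n') := fun i hi => by
          rcases lt_or_ge i n with hin | hin
          · exact splice_eqOn_left hin
          · exact (splice_eqOn_right hin).trans (hwx' ⟨hin, hi⟩)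
        exact (hsx'.mono (Iic_subset_Iio.2 hnn')).trans hx'
      · intro y hyP hy
        have hyw : EqOn y.1 w.1 (Ico n N) := fun i hi => (hy hi).trans (splice_eqOn_right hi.1)
        rcases hyP with hyr | hyP
        · refine hwT y ?_
          rw [← Iio_union_Ico_eq_Iio (hnn'.le.trans hN)]
          refine EqOn.union (fun i hi => ?_) hyw
          calc y.1 i = r.1 i := congrFun hyr ⟨i, hi⟩
            _ = w.1 i := ((hw (hi.trans hnn')).trans (splice_eqOn_left hi)).symm
        · exact hx'T y hyP fun i hi => (hyw ⟨hi.1, hi.2.trans_le hN⟩).trans (hwx' hi)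
  obtain ⟨x', hx', n', hnn', hx'T⟩ := key _ subset_rfl hfin
  exact ⟨x', hx', n', hnn', fun y hy =>
    hx'T y ⟨y, (hy ⟨le_rfl, hnn'⟩).trans (hx' self_mem_Iic), rfl⟩ hy⟩

lemma exists_fusion {T : ℕ → Set IncSeq} (hT : ∀ k, IsNowhereDense (T k)) (g : ℕ → ℕ) :
    ∃ n σ : ℕ → ℕ, StrictMono n ∧ StrictMono σ ∧ (∀ k, g (n k) ≤ σ (n k)) ∧
      ∀ k (y : IncSeq), EqOn y.1 σ (Ico (n k) (n (k + 1))) → y ∉ T k := by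
  have step : ∀ k (x : IncSeq) (m : ℕ), ∃ x' : IncSeq, EqOn x'.1 x.1 (Iio m) ∧
      g m ≤ x'.1 m ∧ ∃ m' > m, ∀ y : IncSeq, EqOn y.1 x'.1 (Ico m m') → y ∉ T k := by
    intro k x m
    let raised : IncSeq :=
      splice x ⟨fun i => x.1 i + g m, x.2.add_const _⟩ m (Nat.le_add_right _ _)
    obtain ⟨x', hx', hx'T⟩ := (hT k).exists_eqOn_Ico_notMem raised m
    refine ⟨x', fun i hi => (hx' (Iio_subset_Iic_self hi)).trans (splice_eqOn_left hi), ?_, hx'T⟩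
    rw [hx' self_mem_Iic, splice_eqOn_right self_mem_Ici]
    exact Nat.le_add_left _ _
  choose! X hX hXg N hN hXT using step
  let s : ℕ → IncSeq × ℕ := fun k =>
    Nat.rec (⟨id, strictMono_id⟩, 0) (fun k p => (X k p.1 p.2, N k p.1 p.2)) k
  have hn : StrictMono fun k => (s k).2 := strictMono_nat_of_lt_succ fun k => hN _ _ _
  obtain ⟨σ, hσ⟩ := exists_eqOn_Iio_of_eqOn_succ (x := fun k => (s k).1.1) hn fun k => hX _ _ _
  have hσmono : StrictMono σ := strictMono_nat_of_lt_succ fun i => by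
    have hi : i + 1 < (s (i + 2)).2 := (i + 1).lt_succ_self.trans_le hn.le_apply
    rw [hσ (i + 2) hi, hσ (i + 2) (i.lt_succ_self.trans hi)]
    exact (s (i + 2)).1.2 i.lt_succ_self
  refine ⟨_, σ, hn, hσmono, fun k => ?_, fun k y hy => ?_⟩
  · rw [hσ (k + 1) (hn k.lt_succ_self)]
    exact hXg _ _ _
  · exact hXT k (s k).1 (s k).2 y fun i hi => (hy hi).trans (hσ (k + 1) hi.2)

lemma SemifilterOn.exists_eventually_inter_Ico_nonempty_of_isMeagre {F : Set (Set ℕ)}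
    (hF : SemifilterOn F) {g : ℕ → ℕ} (hg : StrictMono g)
    (hM : IsMeagre {h : IncSeq | LeSF F g h.1}) :
    ∃ n : ℕ → ℕ, StrictMono n ∧
      ∀ A ∈ F, ∀ᶠ k in atTop, (A ∩ Ico (n k) (n (k + 1))).Nonempty := by
  obtain ⟨T, hTmono, hT, hMT⟩ := hM.exists_monotone_isNowhereDense
  obtain ⟨n, σ, hn, hσ, hgσ, hσT⟩ := exists_fusion hT g
  refine ⟨n, hn, fun A hA => ?_⟩
  by_contra hAn
  let block (k : ℕ) := Ico (n k) (n (k + 1))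
  -- `h` follows `σ` on the blocks missed by `A` and dominates `g` on all other blocks
  let B := {i | ∀ k, i ∈ block k → (A ∩ block k).Nonempty}
  have hB : ∀ i ∈ B, i + 1 ∉ B → g (i + 1) ≤ σ (i + 1) := by
    intro i hi hi'
    obtain ⟨k, hik, hAk⟩ : ∃ k, i + 1 ∈ block k ∧ ¬(A ∩ block k).Nonempty := by
      simpa [B] using hi'
    have hk : n k = i + 1 := by
      by_contra hne
      exact hAk (hi k ⟨Nat.le_of_lt_succ (lt_of_le_of_ne hik.1 hne), i.lt_succ_self.trans hik.2⟩)
    exact hk ▸ hgσ k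
  let h : IncSeq := ⟨fun i => max (σ i) (B.indicator g i), hσ.max_indicator hg hB⟩
  have hgh : LeSF F g h.1 := hF.mem_of_superset hA fun i hi =>
    (indicator_of_mem (fun k hik => ⟨i, hi, hik⟩) g).ge.trans (le_max_right _ _)
  obtain ⟨m, hm⟩ := mem_iUnion.1 (hMT hgh)
  obtain ⟨k, hkm, hk⟩ := frequently_atTop.1 (not_eventually.1 hAn) m
  refine hσT k h (fun i hi => ?_) (hTmono hkm hm)
  have hiB : i ∉ B := fun hiB => hk (hiB k hi)
  simp [h, indicator_of_notMem hiB]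

lemma SemifilterOn.not_isMeagre_setOf_leSF {F : Set (Set ℕ)} (hF : SemifilterOn F)
    (hnm : NonmeagerSF F) (f : ℕ → ℕ) : ¬IsMeagre {h : IncSeq | LeSF F f h.1} := by
  intro hM
  obtain ⟨g, hg, hfg⟩ := exists_strictMono_ge f
  obtain ⟨n, hn, hFn⟩ := hF.exists_eventually_inter_Ico_nonempty_of_isMeagre hg <|
    hM.mono fun h hh => hF.mem_of_superset hh fun i hi => (hfg i).trans hi
  refine hnm ((isMeagre_setOf_eventually_exists_mem_Ico hn).mono fun x hx => ?_)
  exact (hFn _ hx).mono fun k ⟨i, hxi, hik⟩ => ⟨i, hik, hxi⟩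

/-- a nonmeager filter is nonmeager-bounding: for every
`Y ⊆ ℕ^ℕ` of size `< b(F)`, the set of increasing `≤_F`-bounds of `Y` is
nonmeager. -/
theorem stmt_14 (F : Set (Set ℕ)) (hF : FilterOn F) (hnm : NonmeagerSF F)
    (Y : Set (ℕ → ℕ)) (hY : #Y < bSF F) :
    ¬ IsMeagre {g : {g : ℕ → ℕ // StrictMono g} |
        ∀ f ∈ Y, LeSF F f g.val} := by
  obtain ⟨g, hg⟩ := boundedSF_of_mk_lt_bSF hY
  exact fun hM => hF.1.not_isMeagre_setOf_leSF hnm g <|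
    hM.mono fun h hgh f hf => hF.leSF_trans (hg f hf) hgh
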